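/- Let U = {X_0, …, X_{L−1}} be a perfectly balanced (N,M,L)-FHS set over F with N ≥ 2 and L ≥ 2 (so that M divides N and N_{X_i}(a) = N/M for every i and every a ∈ F). Then U has optimal average Hamming correlation, i.e., A_a(U)/(N(L−1)) + A_c(U)/(N−1) = (NL−M)/(M(N−1)(L−1)). -/

import Mathlib

open Finset

/-- Periodic Hamming correlation of two FHSs `X, Y : ZMod N → F` at shift `τ`. -/
def Hcorr {N : ℕ} [NeZero N] {F : Type*} [DecidableEq F]
    (X Y : ZMod N → F) (τ : ZMod N) : ℕ :=
  (Finset.univ.filter (fun t => X t = Y (t + τ))).card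

/-- `N_X(a)`: number of occurrences of frequency `a` in the FHS `X`. -/
def countFreq {N : ℕ} [NeZero N] {F : Type*} [DecidableEq F]
    (X : ZMod N → F) (a : F) : ℕ :=
  (Finset.univ.filter (fun t => X t = a)).card

/-- `N_U(a)`: total number of occurrences of `a` in the FHS set `U`. -/
def countFreqSet {N L : ℕ} [NeZero N] {F : Type*} [DecidableEq F]
    (U : Fin L → ZMod N → F) (a : F) : ℕ :=
  ∑ i : Fin L, countFreq (U i) a

/-- `S_a(U)`: sum of all out-of-phase Hamming autocorrelation values. -/
def Sa {N L : ℕ} [NeZero N] {F : Type*} [DecidableEq F]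
    (U : Fin L → ZMod N → F) : ℕ :=
  ∑ i : Fin L, ∑ τ ∈ Finset.univ \ {(0 : ZMod N)}, Hcorr (U i) (U i) τ

/-- `S_c(U)`: sum of all Hamming crosscorrelation values (ordered pairs `i ≠ j`). -/
def Sc {N L : ℕ} [NeZero N] {F : Type*} [DecidableEq F]
    (U : Fin L → ZMod N → F) : ℕ :=
  ∑ i : Fin L, ∑ j ∈ Finset.univ \ {i}, ∑ τ : ZMod N, Hcorr (U i) (U j) τ

/-- Average Hamming autocorrelation `A_a(U) = S_a(U)/(L(N-1))`. -/
def Aa {N L : ℕ} [NeZero N] {F : Type*} [DecidableEq F]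
    (U : Fin L → ZMod N → F) : ℚ :=
  (Sa U : ℚ) / ((L : ℚ) * ((N : ℚ) - 1))

/-- Average Hamming crosscorrelation `A_c(U) = S_c(U)/(L(L-1)N)`. -/
def Ac {N L : ℕ} [NeZero N] {F : Type*} [DecidableEq F]
    (U : Fin L → ZMod N → F) : ℚ :=
  (Sc U : ℚ) / ((L : ℚ) * ((L : ℚ) - 1) * (N : ℚ))

/-- `H_a(U)`: maximum out-of-phase Hamming autocorrelation of the set `U`. -/
def Ha {N L : ℕ} [NeZero N] {F : Type*} [DecidableEq F]
    (U : Fin L → ZMod N → F) : ℕ :=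
  Finset.univ.sup fun i => (Finset.univ \ {(0 : ZMod N)}).sup fun τ => Hcorr (U i) (U i) τ

/-- `H_c(U)`: maximum Hamming crosscorrelation of the set `U`. -/
def Hc {N L : ℕ} [NeZero N] {F : Type*} [DecidableEq F]
    (U : Fin L → ZMod N → F) : ℕ :=
  Finset.univ.sup fun i => (Finset.univ \ {i}).sup fun j =>
    Finset.univ.sup fun τ => Hcorr (U i) (U j) τ

/-- `U` has optimal average Hamming correlation (meets the Peng et al. AHC bound with equality). -/
def optimalAHC {N L : ℕ} [NeZero N] {F : Type*} [Fintype F] [DecidableEq F]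
    (U : Fin L → ZMod N → F) : Prop :=
  Aa U / ((N : ℚ) * ((L : ℚ) - 1)) + Ac U / ((N : ℚ) - 1)
    = ((N : ℚ) * L - Fintype.card F) /
      ((Fintype.card F : ℚ) * ((N : ℚ) - 1) * ((L : ℚ) - 1))

/-- The cyclotomic class `C_r = {α^(Ml+r) : 0 ≤ l ≤ f-1}`. -/
def cycClass {F : Type*} [Monoid F] [DecidableEq F] (α : F) (M f r : ℕ) : Finset F :=
  (Finset.range f).image fun l => α ^ (M * l + r)

/-- The cyclotomic number `(i,j)_M = |(C_i + 1) ∩ C_j|`. -/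
def cycNum {F : Type*} [Field F] [DecidableEq F] (α : F) (M f i j : ℕ) : ℕ :=
  (((cycClass α M f i).image fun x => x + 1) ∩ cycClass α M f j).card

/-!
Summing `H_{X,Y}(τ)` over all shifts counts coincidences frequency by frequency, so
`∑_τ H_{X,Y}(τ) = ∑_a N_X(a) N_Y(a)`. Summing this over all ordered pairs `(i, j)` and removing the
in-phase autocorrelations `H_{X_i}(0) = N` gives `S_a + S_c + LN = ∑_a N_U(a)²`, while the left-hand
side of the AHC identity is `(S_a + S_c) / (LN(N-1)(L-1))`. Perfect balance forces `N_U(a) = LN/M`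
for every `a`, and the identity becomes a rational-function computation.
-/

section Correlation

variable {N : ℕ} [NeZero N] {F : Type*} [DecidableEq F]

theorem Hcorr_self_zero (X : ZMod N → F) : Hcorr X X 0 = N := by
  simp [Hcorr, ZMod.card]

variable [Fintype F]

theorem sum_countFreq (X : ZMod N → F) : ∑ a : F, countFreq X a = N := by
  unfold countFreq
  rw [← card_eq_sum_card_fiberwise fun t _ => mem_univ (X t),
    card_univ, ZMod.card]

theorem sum_comp_eq_sum_countFreq_mul (X : ZMod N → F) (g : F → ℕ) :
    ∑ t, g (X t) = ∑ a : F, countFreq X a * g a := by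
  rw [← sum_fiberwise univ X]
  refine sum_congr rfl fun a _ => ?_
  rw [sum_congr rfl fun t ht => congrArg g (mem_filter.mp ht).2, sum_const, smul_eq_mul,
    countFreq]

theorem sum_Hcorr (X Y : ZMod N → F) :
    ∑ τ, Hcorr X Y τ = ∑ a : F, countFreq X a * countFreq Y a := by
  have hshift : ∀ t, ∑ τ, (if X t = Y (t + τ) then 1 else 0) = countFreq Y (X t) := fun t => by
    rw [countFreq, card_filter]
    exact Fintype.sum_equiv (Equiv.addLeft t) _ _ fun τ => by simp [eq_comm]
  simp only [Hcorr, card_filter]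
  rw [sum_comm, sum_congr rfl fun t _ => hshift t, sum_comp_eq_sum_countFreq_mul]

theorem Sa_add_Sc_add_eq_sum_countFreqSet_sq {L : ℕ} (U : Fin L → ZMod N → F) :
    Sa U + Sc U + L * N = ∑ a : F, countFreqSet U a ^ 2 := by
  have hsplit : ∀ i, ∑ j, ∑ τ, Hcorr (U i) (U j) τ
      = N + ∑ τ ∈ univ \ {0}, Hcorr (U i) (U i) τ
          + ∑ j ∈ univ \ {i}, ∑ τ, Hcorr (U i) (U j) τ := fun i => by
    rw [sum_eq_add_sum_sdiff_singleton_of_mem (mem_univ i),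
      sum_eq_add_sum_sdiff_singleton_of_mem (mem_univ 0), Hcorr_self_zero]
  calc Sa U + Sc U + L * N
      = ∑ i, ∑ j, ∑ τ, Hcorr (U i) (U j) τ := by
        simp only [hsplit, sum_add_distrib, Sa, Sc, sum_const, card_univ, Fintype.card_fin,
          smul_eq_mul]
        ring
    _ = ∑ a : F, countFreqSet U a ^ 2 := by
        simp only [sum_Hcorr, countFreqSet, sq, sum_mul_sum]
        exact (sum_comm.trans (sum_congr rfl fun _ _ => sum_comm)).symm

end Correlation

theorem Aa_div_add_Ac_div {N L : ℕ} [NeZero N] {F : Type*} [DecidableEq F]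
    (U : Fin L → ZMod N → F) :
    Aa U / ((N : ℚ) * ((L : ℚ) - 1)) + Ac U / ((N : ℚ) - 1)
      = (Sa U + Sc U : ℚ) / (L * N * ((N : ℚ) - 1) * ((L : ℚ) - 1)) := by
  rw [Aa, Ac, div_div, div_div, add_div]
  ring_nf

theorem card_mul_countFreq_of_balanced {N : ℕ} [NeZero N] {F : Type*} [Fintype F]
    [DecidableEq F] {X : ZMod N → F} (hX : ∀ a b, countFreq X a = countFreq X b) (a : F) :
    Fintype.card F * countFreq X a = N := by
  calc Fintype.card F * countFreq X a = ∑ b, countFreq X b := by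
        rw [sum_congr rfl fun b _ => hX b a, sum_const, card_univ, smul_eq_mul]
    _ = N := sum_countFreq X

theorem card_mul_countFreqSet_of_balanced {N L : ℕ} [NeZero N] {F : Type*} [Fintype F]
    [DecidableEq F] {U : Fin L → ZMod N → F}
    (hU : ∀ i a b, countFreq (U i) a = countFreq (U i) b) (a : F) :
    Fintype.card F * countFreqSet U a = L * N := by
  simp [countFreqSet, mul_sum, card_mul_countFreq_of_balanced (hU _)]

theorem perfectly_balanced_optimal_AHC_general {N M L : ℕ} [NeZero N] (hL : 2 ≤ L)
    {F : Type*} [Fintype F] [DecidableEq F] (hM : Fintype.card F = M)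
    (U : Fin L → ZMod N → F)
    (hpb : ∀ (i : Fin L) (a b : F), countFreq (U i) a = countFreq (U i) b) :
    Aa U / ((N : ℚ) * ((L : ℚ) - 1)) + Ac U / ((N : ℚ) - 1)
      = ((N : ℚ) * (L : ℚ) - (M : ℚ)) / ((M : ℚ) * ((N : ℚ) - 1) * ((L : ℚ) - 1)) := by
  have : Nonempty F := ⟨U ⟨0, by omega⟩ 0⟩
  have hM0 : (M : ℚ) ≠ 0 := by simp [← hM]
  have hL0 : (L : ℚ) ≠ 0 := by positivity
  have hN0 : (N : ℚ) ≠ 0 := NeZero.ne _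
  have hU : ∀ a, (countFreqSet U a : ℚ) = L * N / M := fun a => by
    rw [eq_div_iff hM0, mul_comm]
    exact_mod_cast hM ▸ card_mul_countFreqSet_of_balanced hpb a
  have hS : (Sa U + Sc U : ℚ) = (L * N) ^ 2 / M - L * N := by
    have h := congrArg (Nat.cast : ℕ → ℚ) (Sa_add_Sc_add_eq_sum_countFreqSet_sq U)
    push_cast [hU] at h
    simp only [sum_const, card_univ, hM, nsmul_eq_mul] at h
    rw [eq_sub_iff_add_eq, h]
    field_simp
  rw [Aa_div_add_Ac_div, hS]
  field_simp

/-- Corollary 7, a perfectly balanced FHS set has optimal AHC. -/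
theorem perfectly_balanced_optimal_AHC {N M L : ℕ} [NeZero N] (hN : 2 ≤ N) (hL : 2 ≤ L)
    {F : Type*} [Fintype F] [DecidableEq F] (hM : Fintype.card F = M)
    (U : Fin L → ZMod N → F)
    (hpb : ∀ (i : Fin L) (a b : F), countFreq (U i) a = countFreq (U i) b) :
    Aa U / ((N : ℚ) * ((L : ℚ) - 1)) + Ac U / ((N : ℚ) - 1)
      = ((N : ℚ) * (L : ℚ) - (M : ℚ)) / ((M : ℚ) * ((N : ℚ) - 1) * ((L : ℚ) - 1)) :=
  perfectly_balanced_optimal_AHC_general hL hM U hpb
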